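/- The Mix Axiom is valid: for all formulas α, φ, every nominal n, every model M and point s, if M, s ⊨ E(n ∧ α) ∧ ⟨!¬n⟩φ then M, s ⊨ ⟨-α⟩φ. (Here E(n ∧ α) says some point is named n and satisfies α; ⟨!¬n⟩φ says s survives relativization to the points not named n and φ holds there.) -/

import Mathlib

/-! The witness `t` of `E(n ∧ α)` is the only point named `n`, so announcing `¬n` removes
exactly `t`, and `t ≠ s` because `s` survives that announcement. -/

/-- MLSR with nominals, public announcement, and the global modality:
φ ::= p | n | ⊤ | ¬φ | φ∨φ | ◇φ | ⟨!φ⟩φ | ⟨-φ⟩φ | Eφ. -/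
inductive Form : Type where
  | atom : ℕ → Form
  | nom : ℕ → Form
  | top : Form
  | neg : Form → Form
  | or : Form → Form → Form
  | dia : Form → Form
  | ann : Form → Form → Form
  | rem : Form → Form → Form
  | E : Form → Form

/-- A relational model with a valuation for proposition letters and a partial
naming function for nominals (each nominal names at most one point). -/
structure Model (W : Type) where
  R : W → W → Prop
  V : ℕ → W → Prop
  Nm : ℕ → Option W

/-- Truth relative to a current domain `D` (submodel semantics): announcement
⟨!φ⟩ψ restricts the domain to the points satisfying φ, removal ⟨-φ⟩ψ deletes a
single φ-point distinct from the current one, E is the global modality. -/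
def Sat {W : Type} (M : Model W) : Form → Set W → W → Prop
  | .atom p, _, s => M.V p s
  | .nom n, _, s => M.Nm n = some s
  | .top, _, _ => True
  | .neg φ, D, s => ¬ Sat M φ D s
  | .or φ ψ, D, s => Sat M φ D s ∨ Sat M ψ D s
  | .dia φ, D, s => ∃ t ∈ D, M.R s t ∧ Sat M φ D t
  | .ann φ ψ, D, s => Sat M φ D s ∧ Sat M ψ {t | t ∈ D ∧ Sat M φ D t} s
  | .rem φ ψ, D, s => ∃ t ∈ D, t ≠ s ∧ Sat M φ D t ∧ Sat M ψ (D \ {t}) s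
  | .E φ, D, _ => ∃ t ∈ D, Sat M φ D t

/-- Conjunction, defined from ¬ and ∨. -/
def Form.and (a b : Form) : Form := .neg (.or (.neg a) (.neg b))

theorem sat_and {W : Type} {M : Model W} {D : Set W} {s : W} {a b : Form} :
    Sat M (Form.and a b) D s ↔ Sat M a D s ∧ Sat M b D s := by
  simp only [Form.and, Sat, not_or, not_not]

theorem setOf_sat_neg_nom {W : Type} {M : Model W} {D : Set W} {t : W} {n : ℕ}
    (hn : M.Nm n = some t) : {u | u ∈ D ∧ Sat M (.neg (.nom n)) D u} = D \ {t} := by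
  ext u
  simp [Sat, hn, eq_comm]

/-- Validity of the Mix Axiom: (E(n ∧ α) ∧ ⟨!¬n⟩φ) → ⟨-α⟩φ. -/
theorem stmt7 {W : Type} (M : Model W) (D : Set W) (s : W) (n : ℕ) (α φ : Form) :
    Sat M (Form.and (.E (Form.and (.nom n) α)) (.ann (.neg (.nom n)) φ)) D s →
      Sat M (.rem α φ) D s := by
  rw [sat_and]
  rintro ⟨⟨t, htD, hnα⟩, hns, hφ⟩
  obtain ⟨hnt, hαt⟩ := sat_and.mp hnα
  refine ⟨t, htD, ?_, hαt, ?_⟩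
  · rintro rfl
    exact hns hnt
  · rwa [setOf_sat_neg_nom hnt] at hφ
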